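/- For every integer n ≥ 1, every guess g ∈ G and every candidate set C ⊆ S, V_n(g,C) ≤ V*(g,C). -/
import Mathlib


/-!
Formalization of guessing games (Wordle-style), following the paper's definitions:
guesses `G`, secrets `S ⊆ G`, responses `R` with `|R| > 1`, affirmative response
`r* ∈ R`, and an answering function `a` with `a(g,s) = r* ↔ g = s`.
-/

structure GuessingGame (α ρ : Type*) [DecidableEq α] [DecidableEq ρ] where
  G : Finset α
  S : Finset α
  R : Finset ρ
  rstar : ρ
  ans : α → α → ρ
  S_subset_G : S ⊆ G
  one_lt_card_R : 1 < R.card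
  rstar_mem : rstar ∈ R
  ans_mem : ∀ g ∈ G, ∀ s ∈ S, ans g s ∈ R
  ans_eq_rstar_iff : ∀ g ∈ G, ∀ s ∈ S, (ans g s = rstar ↔ g = s)

namespace GuessingGame

variable {α ρ : Type*} [DecidableEq α] [DecidableEq ρ] (gm : GuessingGame α ρ)

/-- The split `C_{g,r} = {c ∈ C : a(g,c) = r}`. -/
def split (C : Finset α) (g : α) (r : ρ) : Finset α :=
  C.filter fun c => gm.ans g c = r

/-- `nSplits(g,C) = |{r ∈ R : C_{g,r} ≠ ∅}|`. -/
def nSplits (g : α) (C : Finset α) : ℕ :=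
  (gm.R.filter fun r => (gm.split C g r).Nonempty).card

/-- The useful guesses `UG(C)`: for `|C| > 1` the guesses `g ∈ G` with
`nSplits(g,C) ≠ 1`; for `|C| ≤ 1`, `UG(C) = C`. -/
def UG (C : Finset α) : Finset α :=
  if 1 < C.card then gm.G.filter fun g => gm.nSplits g C ≠ 1 else C

/-- `MaxSplits(C) = max_{g ∈ G} nSplits(g,C)`. -/
def MaxSplits (C : Finset α) : ℕ :=
  gm.G.sup fun g => gm.nSplits g C

end GuessingGame

/-- `Bound(n,b)`: `Bound(0,b) = 0`, `Bound(n,1) = n(n+1)/2`, and for `n > 0`, `b > 1`,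
`Bound(n,b) = Σ_{i=1}^{k} i·b^{i-1} + (k+1)·(n - (b^k - 1)/(b-1))` where
`k = ⌊log_b (n(b-1)+1)⌋`. -/
def Bound (n b : ℕ) : ℕ :=
  if n = 0 then 0
  else if b = 1 then n * (n + 1) / 2
  else
    (∑ i ∈ Finset.range (Nat.log b (n * (b - 1) + 1)), (i + 1) * b ^ i) +
      (Nat.log b (n * (b - 1) + 1) + 1) *
        (n - (b ^ Nat.log b (n * (b - 1) + 1) - 1) / (b - 1))

namespace GuessingGame

variable {α ρ : Type*} [DecidableEq α] [DecidableEq ρ] (gm : GuessingGame α ρ)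

/-- Fuel-based implementation of the well-founded recursion defining `MinTotal`:
`MinTotal(∅) = 0` and for nonempty `C`,
`MinTotal(C) = min_{g ∈ UG(C)} (|C| + Σ_{r ∈ R \ {r*}} MinTotal(C_{g,r}))`.
Fuel `|C|` suffices since for a useful guess every split is a proper subset of `C`. -/
noncomputable def MinTotalAux : ℕ → Finset α → ℕ
  | 0, _ => 0
  | n + 1, C =>
    if C = ∅ then 0
    else
      sInf (↑((gm.UG C).image fun g =>
        C.card + ∑ r ∈ gm.R.erase gm.rstar, MinTotalAux n (gm.split C g r)) : Set ℕ)

/-- `MinTotal(C)`. -/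
noncomputable def MinTotal (C : Finset α) : ℕ :=
  gm.MinTotalAux C.card C

/-- `V*(g,C) = |C| + Σ_{r ∈ R \ {r*}} MinTotal(C_{g,r})`. -/
noncomputable def Vstar (g : α) (C : Finset α) : ℕ :=
  C.card + ∑ r ∈ gm.R.erase gm.rstar, gm.MinTotal (gm.split C g r)

/-- The lower bounds `LB_i` (`i ≥ 1`; `LB 0` is junk):
`LB_1(C) = Bound(|C|, MaxSplits(S))`, `LB_2(C) = Bound(|C|, MaxSplits(C))`, and for
`i ≥ 1`, `LB_{i+2}(∅) = 0` and `LB_{i+2}(C) = min_{g ∈ UG(C)} V_i(g,C)` for nonempty `C`,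
where `V_i(g,C) = |C| + Σ_{r ∈ R \ {r*}} LB_i(C_{g,r})`. -/
noncomputable def LB : ℕ → Finset α → ℕ
  | 0, _ => 0
  | 1, C => Bound C.card (gm.MaxSplits gm.S)
  | 2, C => Bound C.card (gm.MaxSplits C)
  | n + 3, C =>
    if C = ∅ then 0
    else
      sInf (↑((gm.UG C).image fun g =>
        C.card + ∑ r ∈ gm.R.erase gm.rstar, LB (n + 1) (gm.split C g r)) : Set ℕ)

/-- `V_i(g,C) = |C| + Σ_{r ∈ R \ {r*}} LB_i(C_{g,r})`. -/
noncomputable def V (i : ℕ) (g : α) (C : Finset α) : ℕ :=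
  C.card + ∑ r ∈ gm.R.erase gm.rstar, gm.LB i (gm.split C g r)

end GuessingGame

section Statements

open GuessingGame

variable {α ρ : Type*} [DecidableEq α] [DecidableEq ρ]

/- auxiliary combinatorial layer -/
open Finset

/-- capacity of the first `j` levels: `(b^j - 1)/(b-1)` as a geometric sum. -/
def capc (b j : ℕ) : ℕ := ∑ i ∈ Finset.range j, b ^ i

/-- Alternative form of `Bound`. -/
def Faux (n b : ℕ) : ℕ := ∑ j ∈ Finset.range (n + 1), (n - capc b j)

lemma capc_succ (b j : ℕ) : capc b (j + 1) = 1 + b * capc b j := by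
  unfold capc; rw [geom_sum_succ]; ring

lemma le_capc (b : ℕ) (hb : 1 ≤ b) (j : ℕ) : j ≤ capc b j := by
  calc j = ∑ _i ∈ Finset.range j, 1 := by simp
  _ ≤ capc b j := Finset.sum_le_sum fun i _ => Nat.one_le_pow _ _ hb

lemma capc_mono (b : ℕ) {j k : ℕ} (h : j ≤ k) : capc b j ≤ capc b k :=
  Finset.sum_le_sum_of_subset (Finset.range_subset_range.2 h)

lemma Faux_eq_sum (n b M : ℕ) (hb : 1 ≤ b) (hM : n + 1 ≤ M) :
    Faux n b = ∑ j ∈ Finset.range M, (n - capc b j) := by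
  unfold Faux
  rw [← Finset.sum_range_add_sum_Ico _ hM]
  have : ∑ j ∈ Finset.Ico (n+1) M, (n - capc b j) = 0 := by
    apply Finset.sum_eq_zero
    intro j hj
    have : n + 1 ≤ j := (Finset.mem_Ico.1 hj).1
    have : n + 1 ≤ capc b j := le_trans this (le_capc b hb j)
    omega
  omega

lemma sum_tsub_ge {ι : Type*} (s : Finset ι) (f : ι → ℕ) (x : ℕ) :
    (∑ i ∈ s, f i) - s.card * x ≤ ∑ i ∈ s, (f i - x) := by
  have : ∑ i ∈ s, f i ≤ ∑ i ∈ s, ((f i - x) + x) :=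
    Finset.sum_le_sum fun i _ => by omega
  rw [Finset.sum_add_distrib, Finset.sum_const, smul_eq_mul] at this
  omega

/-- The key recurrence inequality for `Faux`. -/
lemma Faux_le {ι : Type*} (t : Finset ι) (m : ι → ℕ) (n b : ℕ)
    (hb : 1 ≤ b)
    (hcard : (t.filter fun i => m i ≠ 0).card ≤ b)
    (hsum : n ≤ 1 + ∑ i ∈ t, m i)
    (hlt : ∀ i ∈ t, m i < n) :
    Faux n b ≤ n + ∑ i ∈ t, Faux (m i) b := by
  rcases Nat.eq_zero_or_pos n with hn | hn
  · simp [hn, Faux, capc]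
  have hL : Faux n b = n + ∑ j ∈ Finset.range n, (n - capc b (j+1)) := by
    unfold Faux
    rw [Finset.sum_range_succ']
    have h0 : n - capc b 0 = n := by simp [capc]
    omega
  rw [hL]
  apply Nat.add_le_add_left
  have key : ∀ j, n - capc b (j+1) ≤ ∑ i ∈ t, (m i - capc b j) := by
    intro j
    set T := t.filter fun i => m i ≠ 0 with hT
    have h1 : ∑ i ∈ t, (m i - capc b j) = ∑ i ∈ T, (m i - capc b j) := by
      rw [hT, Finset.sum_filter]
      apply Finset.sum_congr rfl
      intro i _
      by_cases h : m i = 0 <;> simp [h]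
    have h2 : ∑ i ∈ t, m i = ∑ i ∈ T, m i := by
      rw [hT, Finset.sum_filter]
      apply Finset.sum_congr rfl
      intro i _
      by_cases h : m i = 0 <;> simp [h]
    rw [h1]
    have h3 := sum_tsub_ge T m (capc b j)
    have h4 : T.card * capc b j ≤ b * capc b j := Nat.mul_le_mul_right _ hcard
    have h5 : capc b (j+1) = 1 + b * capc b j := capc_succ b j
    omega
  calc ∑ j ∈ Finset.range n, (n - capc b (j+1))
      ≤ ∑ j ∈ Finset.range n, ∑ i ∈ t, (m i - capc b j) :=
        Finset.sum_le_sum fun j _ => key j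
    _ = ∑ i ∈ t, ∑ j ∈ Finset.range n, (m i - capc b j) := Finset.sum_comm
    _ = ∑ i ∈ t, Faux (m i) b := by
        apply Finset.sum_congr rfl
        intro i hi
        exact (Faux_eq_sum (m i) b n hb (hlt i hi)).symm

lemma capc_sum_identity (b : ℕ) : ∀ k,
    ∑ j ∈ Finset.range (k+1), (capc b k - capc b j) = ∑ i ∈ Finset.range k, (i+1) * b ^ i := by
  intro k
  induction k with
  | zero => simp
  | succ k ih =>
    rw [Finset.sum_range_succ (f := fun j => capc b (k+1) - capc b j), Nat.sub_self, add_zero]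
    have : ∀ j ∈ Finset.range (k+1), capc b (k+1) - capc b j = (capc b k - capc b j) + b ^ k := by
      intro j hj
      have hj' : j ≤ k := Nat.lt_succ_iff.1 (Finset.mem_range.1 hj)
      have h1 : capc b j ≤ capc b k := capc_mono b hj'
      have h2 : capc b (k+1) = capc b k + b ^ k := Finset.sum_range_succ _ _
      omega
    rw [Finset.sum_congr rfl this, Finset.sum_add_distrib, ih, Finset.sum_const,
      Finset.card_range, smul_eq_mul, Finset.sum_range_succ]

lemma geom_mul (b : ℕ) (hb : 2 ≤ b) (j : ℕ) : (b - 1) * capc b j + 1 = b ^ j := by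
  induction j with
  | zero => simp [capc]
  | succ j ih =>
    rw [capc_succ, Nat.mul_add, Nat.mul_one, Nat.mul_left_comm, pow_succ,
      mul_comm (b ^ j) b, ← ih, Nat.mul_add, Nat.mul_one]
    omega

lemma Bound_eq_Faux (n b : ℕ) (hb : 1 ≤ b) : Bound n b = Faux n b := by
  unfold Bound
  rcases Nat.eq_zero_or_pos n with hn | hn
  · simp [hn, Faux, capc]
  rw [if_neg (by omega)]
  rcases eq_or_lt_of_le hb with hb1 | hb2
  · -- b = 1
    subst hb1
    rw [if_pos rfl]
    have hF : Faux n 1 = ∑ j ∈ Finset.range (n+1), (n - j) := by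
      unfold Faux
      apply Finset.sum_congr rfl
      intro j _
      congr 1
      simp [capc]
    have hre := Finset.sum_range_reflect (fun j => j) (n + 1)
    simp only [Nat.add_sub_cancel] at hre
    rw [hF, hre, Finset.sum_range_id]
    simp [Nat.mul_comm]
  · -- 2 ≤ b
    rw [if_neg (by omega)]
    set k := Nat.log b (n * (b - 1) + 1) with hk
    have hx : n * (b-1) + 1 ≠ 0 := by omega
    have hbk : b ^ k ≤ n * (b-1) + 1 := Nat.pow_log_le_self b hx
    have hbk2 : n * (b-1) + 1 < b ^ (k+1) := Nat.lt_pow_succ_log_self hb2 _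
    have hcomm : n * (b-1) = (b-1) * n := Nat.mul_comm _ _
    have hg1 : (b-1) * capc b k + 1 = b ^ k := geom_mul b hb2 k
    have hg2 : (b-1) * capc b (k+1) + 1 = b ^ (k+1) := geom_mul b hb2 (k+1)
    have hdiv : (b ^ k - 1) / (b - 1) = capc b k := by
      have : b ^ k - 1 = (b-1) * capc b k := by omega
      rw [this, Nat.mul_div_cancel_left _ (by omega : 0 < b - 1)]
    have hck : capc b k ≤ n := by
      have h2 : (b-1) * capc b k ≤ (b-1) * n := by omega
      exact Nat.le_of_mul_le_mul_left h2 (by omega)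
    have hck2 : n < capc b (k+1) := by
      by_contra h
      push_neg at h
      have : (b-1) * capc b (k+1) ≤ (b-1) * n := Nat.mul_le_mul_left _ h
      omega
    have hkn : k ≤ n := le_trans (le_capc b hb k) hck
    rw [hdiv]
    have hF : Faux n b = ∑ j ∈ Finset.range (k+1), (n - capc b j) := by
      unfold Faux
      rw [← Finset.sum_range_add_sum_Ico _ (by omega : k + 1 ≤ n + 1)]
      have : ∑ j ∈ Finset.Ico (k+1) (n+1), (n - capc b j) = 0 := by
        apply Finset.sum_eq_zero
        intro j hj
        have h1 : k + 1 ≤ j := (Finset.mem_Ico.1 hj).1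
        have := capc_mono b h1
        omega
      omega
    rw [hF]
    have hsplit : ∀ j ∈ Finset.range (k+1), n - capc b j = (n - capc b k) + (capc b k - capc b j) := by
      intro j hj
      have := capc_mono b (Nat.lt_succ_iff.1 (Finset.mem_range.1 hj))
      omega
    rw [Finset.sum_congr rfl hsplit, Finset.sum_add_distrib, Finset.sum_const, Finset.card_range,
      smul_eq_mul, capc_sum_identity]
    exact Nat.add_comm _ _


namespace GuessingGame

variable {α ρ : Type*} [DecidableEq α] [DecidableEq ρ] (gm : GuessingGame α ρ)

lemma split_subset (C : Finset α) (g : α) (r : ρ) : gm.split C g r ⊆ C :=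
  Finset.filter_subset _ _

lemma mem_split {C : Finset α} {g : α} {r : ρ} {c : α} :
    c ∈ gm.split C g r ↔ c ∈ C ∧ gm.ans g c = r := Finset.mem_filter

lemma nSplits_mono {D C : Finset α} (h : D ⊆ C) (g : α) :
    gm.nSplits g D ≤ gm.nSplits g C := by
  apply Finset.card_le_card
  intro r hr
  rw [Finset.mem_filter] at hr ⊢
  obtain ⟨hrR, c, hc⟩ := hr
  rw [gm.mem_split] at hc
  exact ⟨hrR, c, gm.mem_split.2 ⟨h hc.1, hc.2⟩⟩

lemma nSplits_le {g : α} (hg : g ∈ gm.G) (C : Finset α) :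
    gm.nSplits g C ≤ gm.MaxSplits C :=
  Finset.le_sup (f := fun g => gm.nSplits g C) hg

lemma MaxSplits_mono {D C : Finset α} (h : D ⊆ C) : gm.MaxSplits D ≤ gm.MaxSplits C :=
  Finset.sup_le fun g hg => le_trans (gm.nSplits_mono h g) (gm.nSplits_le hg C)

lemma UG_subset_G {C : Finset α} (hC : C ⊆ gm.S) : gm.UG C ⊆ gm.G := by
  unfold UG
  split
  · exact Finset.filter_subset _ _
  · exact hC.trans gm.S_subset_G

lemma one_le_nSplits {C : Finset α} {g : α} (hg : g ∈ gm.G) (hC : C ⊆ gm.S)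
    (hne : C.Nonempty) : 1 ≤ gm.nSplits g C := by
  obtain ⟨c, hc⟩ := hne
  apply Finset.card_pos.2
  exact ⟨gm.ans g c, Finset.mem_filter.2
    ⟨gm.ans_mem g hg c (hC hc), c, gm.mem_split.2 ⟨hc, rfl⟩⟩⟩

lemma two_le_nSplits_self {C : Finset α} {c : α} (hc : c ∈ C) (hC : C ⊆ gm.S)
    (h2 : 1 < C.card) : 2 ≤ gm.nSplits c C := by
  have hcG : c ∈ gm.G := gm.S_subset_G (hC hc)
  obtain ⟨c', hc', hne⟩ := Finset.exists_mem_ne h2 c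
  have hr1 : gm.ans c c = gm.rstar := (gm.ans_eq_rstar_iff c hcG c (hC hc)).2 rfl
  have hr2 : gm.ans c c' ≠ gm.rstar := by
    intro h
    exact hne ((gm.ans_eq_rstar_iff c hcG c' (hC hc')).1 h).symm
  have hsub : ({gm.rstar, gm.ans c c'} : Finset ρ) ⊆
      gm.R.filter fun r => (gm.split C c r).Nonempty := by
    intro r hr
    rcases Finset.mem_insert.1 hr with rfl | hr
    · exact Finset.mem_filter.2 ⟨gm.rstar_mem, c, gm.mem_split.2 ⟨hc, hr1⟩⟩
    · rw [Finset.mem_singleton] at hr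
      subst hr
      exact Finset.mem_filter.2 ⟨gm.ans_mem c hcG c' (hC hc'), c', gm.mem_split.2 ⟨hc', rfl⟩⟩
  calc 2 = ({gm.rstar, gm.ans c c'} : Finset ρ).card := (Finset.card_pair (Ne.symm hr2)).symm
  _ ≤ _ := Finset.card_le_card hsub

lemma UG_nonempty {C : Finset α} (hC : C ⊆ gm.S) (hne : C.Nonempty) :
    (gm.UG C).Nonempty := by
  obtain ⟨c, hc⟩ := hne
  unfold UG
  split
  · next h =>
    refine ⟨c, Finset.mem_filter.2 ⟨gm.S_subset_G (hC hc), ?_⟩⟩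
    have := gm.two_le_nSplits_self hc hC h
    omega
  · exact ⟨c, hc⟩

lemma split_ssubset {C : Finset α} {g : α} {r : ρ} (hC : C ⊆ gm.S) (hg : g ∈ gm.UG C)
    (hr : r ≠ gm.rstar) : gm.split C g r ⊂ C := by
  unfold UG at hg
  by_cases h1 : 1 < C.card
  · rw [if_pos h1] at hg
    obtain ⟨hgG, hns⟩ := Finset.mem_filter.1 hg
    rw [Finset.ssubset_iff_subset_ne]
    refine ⟨gm.split_subset C g r, fun heq => hns ?_⟩
    have hCne : C.Nonempty := Finset.card_pos.1 (by omega)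
    obtain ⟨c, hc⟩ := hCne
    have hcs : c ∈ gm.split C g r := heq.symm ▸ hc
    have hrc : gm.ans g c = r := (gm.mem_split.1 hcs).2
    have hrR : r ∈ gm.R := hrc ▸ gm.ans_mem g hgG c (hC hc)
    unfold nSplits
    have hfil : gm.R.filter (fun r' => (gm.split C g r').Nonempty) = {r} := by
      apply Finset.eq_singleton_iff_unique_mem.2
      constructor
      · exact Finset.mem_filter.2 ⟨hrR, c, hcs⟩
      · intro r' hr'
        obtain ⟨-, x, hx⟩ := Finset.mem_filter.1 hr'
        have hxC : x ∈ C := gm.split_subset C g r' hx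
        have h1' : gm.ans g x = r' := (gm.mem_split.1 hx).2
        have hxs : x ∈ gm.split C g r := heq.symm ▸ hxC
        have h2' : gm.ans g x = r := (gm.mem_split.1 hxs).2
        rw [← h1', h2']
    rw [hfil, Finset.card_singleton]
  · rw [if_neg h1] at hg
    have hgS : g ∈ gm.S := hC hg
    have hgG : g ∈ gm.G := gm.S_subset_G hgS
    have hempty : gm.split C g r = ∅ := by
      apply Finset.eq_empty_of_forall_notMem
      intro x hx
      obtain ⟨hxC, hax⟩ := gm.mem_split.1 hx
      have hxg : x = g := Finset.card_le_one.1 (le_of_not_gt h1) x hxC g hg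
      subst hxg
      exact hr (hax ▸ (gm.ans_eq_rstar_iff x hgG x hgS).2 rfl)
    rw [hempty]
    exact Finset.empty_ssubset.2 ⟨g, hg⟩

lemma sum_split_card {C : Finset α} {g : α} (hg : g ∈ gm.G) (hC : C ⊆ gm.S) :
    ∑ r ∈ gm.R, (gm.split C g r).card = C.card :=
  (Finset.card_eq_sum_card_fiberwise fun c hc => gm.ans_mem g hg c (hC hc)).symm

lemma split_rstar_card_le {C : Finset α} {g : α} (hg : g ∈ gm.G) (hC : C ⊆ gm.S) :
    (gm.split C g gm.rstar).card ≤ 1 := by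
  have hsub : gm.split C g gm.rstar ⊆ {g} := by
    intro x hx
    obtain ⟨hxC, hax⟩ := gm.mem_split.1 hx
    rw [Finset.mem_singleton]
    exact ((gm.ans_eq_rstar_iff g hg x (hC hxC)).1 hax).symm
  simpa using Finset.card_le_card hsub

lemma MinTotalAux_congr : ∀ N (C : Finset α), C ⊆ gm.S → C.card ≤ N →
    ∀ m₁ m₂, C.card ≤ m₁ → C.card ≤ m₂ →
    gm.MinTotalAux m₁ C = gm.MinTotalAux m₂ C := by
  intro N
  induction N with
  | zero =>
    intro C hC hN m₁ m₂ h1 h2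
    have : C = ∅ := Finset.card_eq_zero.1 (Nat.le_antisymm hN (Nat.zero_le _))
    subst this
    cases m₁ <;> cases m₂ <;> simp [MinTotalAux]
  | succ N ih =>
    intro C hC hN m₁ m₂ h1 h2
    rcases Finset.eq_empty_or_nonempty C with rfl | hne
    · cases m₁ <;> cases m₂ <;> simp [MinTotalAux]
    have hpos : 0 < C.card := Finset.card_pos.2 hne
    obtain ⟨k₁, rfl⟩ : ∃ k, m₁ = k + 1 := ⟨m₁ - 1, by omega⟩
    obtain ⟨k₂, rfl⟩ : ∃ k, m₂ = k + 1 := ⟨m₂ - 1, by omega⟩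
    have hCne : C ≠ ∅ := Finset.nonempty_iff_ne_empty.1 hne
    simp only [MinTotalAux, if_neg hCne]
    have himg : ((gm.UG C).image fun g =>
        C.card + ∑ r ∈ gm.R.erase gm.rstar, gm.MinTotalAux k₁ (gm.split C g r)) =
        ((gm.UG C).image fun g =>
        C.card + ∑ r ∈ gm.R.erase gm.rstar, gm.MinTotalAux k₂ (gm.split C g r)) := by
      apply Finset.image_congr
      intro g hg
      rw [Finset.mem_coe] at hg
      dsimp only
      congr 1
      apply Finset.sum_congr rfl
      intro r hr
      have hss : gm.split C g r ⊂ C := gm.split_ssubset hC hg (Finset.mem_erase.1 hr).1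
      have hcard : (gm.split C g r).card < C.card := Finset.card_lt_card hss
      exact ih _ ((gm.split_subset C g r).trans hC) (by omega) k₁ k₂ (by omega) (by omega)
    rw [himg]

lemma MinTotalAux_eq {C : Finset α} {m : ℕ} (hC : C ⊆ gm.S) (hm : C.card ≤ m) :
    gm.MinTotalAux m C = gm.MinTotal C :=
  gm.MinTotalAux_congr C.card C hC le_rfl m C.card hm le_rfl

lemma MinTotal_spec {C : Finset α} (hC : C ⊆ gm.S) (hne : C.Nonempty) :
    ∃ g ∈ gm.UG C, gm.MinTotal C =
      C.card + ∑ r ∈ gm.R.erase gm.rstar, gm.MinTotal (gm.split C g r) := by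
  have hpos : 0 < C.card := Finset.card_pos.2 hne
  obtain ⟨n, hn⟩ : ∃ n, C.card = n + 1 := ⟨C.card - 1, by omega⟩
  have hCne : C ≠ ∅ := Finset.nonempty_iff_ne_empty.1 hne
  have hMT : gm.MinTotal C = sInf (↑((gm.UG C).image fun g =>
      C.card + ∑ r ∈ gm.R.erase gm.rstar, gm.MinTotalAux n (gm.split C g r)) : Set ℕ) := by
    unfold MinTotal
    rw [hn]
    simp only [MinTotalAux, if_neg hCne]
    rw [← hn]
  have hne' : ((gm.UG C).image fun g =>
      C.card + ∑ r ∈ gm.R.erase gm.rstar, gm.MinTotalAux n (gm.split C g r)).Nonempty :=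
    (gm.UG_nonempty hC hne).image _
  have hmem : gm.MinTotal C ∈ ((gm.UG C).image fun g =>
      C.card + ∑ r ∈ gm.R.erase gm.rstar, gm.MinTotalAux n (gm.split C g r)) := by
    rw [hMT]
    exact_mod_cast Nat.sInf_mem (Finset.coe_nonempty.2 hne')
  obtain ⟨g, hg, hval⟩ := Finset.mem_image.1 hmem
  refine ⟨g, hg, ?_⟩
  rw [← hval]
  congr 1
  apply Finset.sum_congr rfl
  intro r hr
  have hss : gm.split C g r ⊂ C := gm.split_ssubset hC hg (Finset.mem_erase.1 hr).1
  have hcard : (gm.split C g r).card < C.card := Finset.card_lt_card hss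
  exact gm.MinTotalAux_eq ((gm.split_subset C g r).trans hC) (by omega)

lemma Faux_le_MinTotal : ∀ N (C : Finset α), C.card ≤ N → C ⊆ gm.S →
    ∀ b, gm.MaxSplits C ≤ b → Faux C.card b ≤ gm.MinTotal C := by
  intro N
  induction N with
  | zero =>
    intro C hN hC b hb
    have : C = ∅ := Finset.card_eq_zero.1 (Nat.le_antisymm hN (Nat.zero_le _))
    subst this
    simp [Faux, capc]
  | succ N ih =>
    intro C hN hC b hb
    rcases Finset.eq_empty_or_nonempty C with rfl | hne
    · simp [Faux, capc]
    obtain ⟨g, hgU, hval⟩ := gm.MinTotal_spec hC hne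
    have hgG : g ∈ gm.G := gm.UG_subset_G hC hgU
    have hb1 : 1 ≤ b :=
      le_trans (le_trans (gm.one_le_nSplits hgG hC hne) (gm.nSplits_le hgG C)) hb
    rw [hval]
    have hlt : ∀ r ∈ gm.R.erase gm.rstar, (gm.split C g r).card < C.card := fun r hr =>
      Finset.card_lt_card (gm.split_ssubset hC hgU (Finset.mem_erase.1 hr).1)
    have hcard : ((gm.R.erase gm.rstar).filter fun r => (gm.split C g r).card ≠ 0).card ≤ b := by
      have hsub : ((gm.R.erase gm.rstar).filter fun r => (gm.split C g r).card ≠ 0) ⊆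
          gm.R.filter fun r => (gm.split C g r).Nonempty := by
        intro r hr
        obtain ⟨hr1, hr2⟩ := Finset.mem_filter.1 hr
        exact Finset.mem_filter.2 ⟨Finset.mem_of_mem_erase hr1,
          Finset.card_pos.1 (Nat.pos_of_ne_zero hr2)⟩
      exact le_trans (le_trans (Finset.card_le_card hsub) (gm.nSplits_le hgG C)) hb
    have hsum : C.card ≤ 1 + ∑ r ∈ gm.R.erase gm.rstar, (gm.split C g r).card := by
      have h1 := gm.sum_split_card hgG hC
      have h2 : ∑ r ∈ gm.R.erase gm.rstar, (gm.split C g r).card + (gm.split C g gm.rstar).card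
          = ∑ r ∈ gm.R, (gm.split C g r).card :=
        Finset.sum_erase_add gm.R _ gm.rstar_mem
      have h3 := gm.split_rstar_card_le hgG hC
      omega
    refine le_trans (Faux_le (gm.R.erase gm.rstar) (fun r => (gm.split C g r).card)
      C.card b hb1 hcard hsum hlt) ?_
    apply Nat.add_le_add_left
    apply Finset.sum_le_sum
    intro r hr
    exact ih (gm.split C g r) (by have := hlt r hr; omega)
      ((gm.split_subset C g r).trans hC) b
      (le_trans (gm.MaxSplits_mono (gm.split_subset C g r)) hb)

lemma LB_le_MinTotal (n : ℕ) : 1 ≤ n → ∀ C : Finset α, C ⊆ gm.S →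
    gm.LB n C ≤ gm.MinTotal C := by
  induction n using Nat.strong_induction_on with
  | _ n ih =>
    intro hn C hC
    rcases Finset.eq_empty_or_nonempty C with rfl | hne
    · have hMT : gm.MinTotal (∅ : Finset α) = 0 := by simp [MinTotal, MinTotalAux]
      rw [hMT]
      match n, hn with
      | 1, _ => simp [LB, Bound]
      | 2, _ => simp [LB, Bound]
      | (m+3), _ => simp [LB]
    have hpos : 0 < C.card := Finset.card_pos.2 hne
    match n, hn with
    | 1, _ =>
      show Bound C.card (gm.MaxSplits gm.S) ≤ _
      obtain ⟨c, hc⟩ := hne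
      have hb1 : 1 ≤ gm.MaxSplits gm.S :=
        le_trans (gm.one_le_nSplits (gm.S_subset_G (hC hc)) le_rfl ⟨c, hC hc⟩)
          (gm.nSplits_le (gm.S_subset_G (hC hc)) gm.S)
      rw [Bound_eq_Faux _ _ hb1]
      exact gm.Faux_le_MinTotal C.card C le_rfl hC _ (gm.MaxSplits_mono hC)
    | 2, _ =>
      show Bound C.card (gm.MaxSplits C) ≤ _
      obtain ⟨c, hc⟩ := hne
      have hb1 : 1 ≤ gm.MaxSplits C :=
        le_trans (gm.one_le_nSplits (gm.S_subset_G (hC hc)) hC ⟨c, hc⟩)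
          (gm.nSplits_le (gm.S_subset_G (hC hc)) C)
      rw [Bound_eq_Faux _ _ hb1]
      exact gm.Faux_le_MinTotal C.card C le_rfl hC _ le_rfl
    | (m+3), _ =>
      obtain ⟨g, hgU, hval⟩ := gm.MinTotal_spec hC hne
      have hCne : C ≠ ∅ := Finset.nonempty_iff_ne_empty.1 hne
      have hLB : gm.LB (m+3) C ≤
          C.card + ∑ r ∈ gm.R.erase gm.rstar, gm.LB (m+1) (gm.split C g r) := by
        show (if C = ∅ then 0 else _) ≤ _
        rw [if_neg hCne]
        apply Nat.sInf_le
        exact Finset.mem_coe.2 (Finset.mem_image_of_mem _ hgU)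
      refine le_trans hLB ?_
      rw [hval]
      apply Nat.add_le_add_left
      apply Finset.sum_le_sum
      intro r hr
      exact ih (m+1) (by omega) (by omega) _ ((gm.split_subset C g r).trans hC)

end GuessingGame


theorem statement_16 (gm : GuessingGame α ρ) (n : ℕ) (hn : 1 ≤ n)
    (g : α) (hg : g ∈ gm.G) (C : Finset α) (hCS : C ⊆ gm.S) :
    gm.V n g C ≤ gm.Vstar g C := by
  unfold V Vstar
  apply Nat.add_le_add_left
  apply Finset.sum_le_sum
  intro r _
  exact gm.LB_le_MinTotal n hn _ ((gm.split_subset C g r).trans hCS)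

end Statements
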